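/- For any infinite cardinal κ, Irr_mm(P(κ)) = κ and π(P(κ)) = κ. -/

import Mathlib

open Cardinal Set

universe u
variable {B : Type u} [BooleanAlgebra B]

/-- Membership in the boolean subalgebra of `B` generated by `E`. -/
inductive InGen (E : Set B) : B → Prop
  | base {a : B} : a ∈ E → InGen E a
  | bot : InGen E ⊥
  | compl {a : B} : InGen E a → InGen E aᶜ
  | sup {a b : B} : InGen E a → InGen E b → InGen E (a ⊔ b)

/-- `E` is irredundant. -/
def Irred (E : Set B) : Prop := ∀ a ∈ E, ¬ InGen (E \ {a}) a

/-- `E` is independent. -/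
def Indep (E : Set B) : Prop :=
  ∀ F G : Finset B, ↑F ⊆ E → ↑G ⊆ E → Disjoint F G →
    F.inf id ⊓ G.inf (fun a => aᶜ) ≠ ⊥

/-- `S` is dense in `B`. -/
def DenseSub (S : Set B) : Prop := ∀ b : B, b ≠ ⊥ → ∃ d ∈ S, d ≠ ⊥ ∧ d ≤ b

/-- pi-weight of `B`: least size of a dense subset. -/
noncomputable def piWeight (B : Type u) [BooleanAlgebra B] : Cardinal :=
  sInf {c | ∃ S : Set B, DenseSub S ∧ #S = c}

/-- `E` is a maximal irredundant subset of `B`. -/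
def MaxIrred (E : Set B) : Prop :=
  Irred E ∧ ∀ b : B, b ∉ E → ¬ Irred (insert b E)

/-- least size of a maximal irredundant subset of `B`. -/
noncomputable def irrMM (B : Type u) [BooleanAlgebra B] : Cardinal :=
  sInf {c | ∃ E : Set B, MaxIrred E ∧ #E = c}

/-!
The singletons form the least dense subset of `𝒫(X)`, which gives `π(𝒫(X)) = |X|`.

For `Irr_mm`, let `E` be maximal irredundant in `𝒫(X)` and `x ∈ X`. Since `E ∪ {{x}}` is not
irredundant, either `{x}` is generated by `E`, or some `a ∈ E` is generated by
`(E \ {a}) ∪ {{x}}`; every element of that algebra agrees off `x` with an element of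
`⟨E \ {a}⟩`, and `a` itself is not in `⟨E \ {a}⟩`, so `a ∆ {x}` is. In both cases
`{x} = g ∆ a` with `g ∈ ⟨E⟩` and `a ∈ E ∪ {∅}`, so `|X| ≤ |⟨E⟩| · |E|`. As `⟨E⟩` is finite
for finite `E` and has size `|E|` for infinite `E`, this gives `|X| ≤ |E|`.

Conversely, for `X` well-ordered without maximum, the nonempty initial segments `(-∞, β)` are
irredundant: everything generated by the segments other than `(-∞, β)` is constant on some
interval `[p, β]`. They are maximal: an added `b` must not be generated by them, so `b ≠ ∅, X`; let `c` be the
one of `b`, `bᶜ` with the larger least element `β`; then `(-∞, β) = (-∞, succ β) \ c`.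
-/

open scoped symmDiff

namespace InGen

variable {E : Set B} {a b : B}

lemma mono {D : Set B} (h : E ⊆ D) (ha : InGen E a) : InGen D a := by
  induction ha with
  | base ha => exact .base (h ha)
  | bot => exact .bot
  | compl _ ih => exact .compl ih
  | sup _ _ ih₁ ih₂ => exact .sup ih₁ ih₂

lemma top : InGen E ⊤ := compl_bot (α := B) ▸ InGen.bot.compl

lemma inf (ha : InGen E a) (hb : InGen E b) : InGen E (a ⊓ b) := by
  simpa only [compl_sup, compl_compl] using (ha.compl.sup hb.compl).compl

lemma sdiff (ha : InGen E a) (hb : InGen E b) : InGen E (a \ b) :=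
  sdiff_eq (x := a) ▸ ha.inf hb.compl

lemma exists_finset (ha : InGen E a) : ∃ F : Finset B, ↑F ⊆ E ∧ InGen ↑F a := by
  classical
  induction ha with
  | @base a ha => exact ⟨{a}, by simpa using ha, .base (by simp)⟩
  | bot => exact ⟨∅, by simp, .bot⟩
  | compl _ ih =>
    obtain ⟨F, hFE, hF⟩ := ih
    exact ⟨F, hFE, hF.compl⟩
  | sup _ _ ih₁ ih₂ =>
    obtain ⟨F₁, hF₁E, hF₁⟩ := ih₁
    obtain ⟨F₂, hF₂E, hF₂⟩ := ih₂
    exact ⟨F₁ ∪ F₂, by simp [hF₁E, hF₂E], .sup (hF₁.mono (by simp)) (hF₂.mono (by simp))⟩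

end InGen

namespace Set

variable {X : Type u}

lemma eq_or_eq_symmDiff_singleton_of_forall_ne {s t : Set X} {x : X}
    (h : ∀ y ≠ x, y ∈ s ↔ y ∈ t) : s = t ∨ s = t ∆ {x} := by
  by_cases hx : x ∈ s ↔ x ∈ t
  · left
    ext y
    rcases eq_or_ne y x with rfl | hy
    exacts [hx, h y hy]
  · right
    ext y
    rcases eq_or_ne y x with rfl | hy
    · simp only [mem_symmDiff, mem_singleton_iff, not_true, and_false, true_and, false_or]
      tauto
    · simp [mem_symmDiff, hy, h y hy]

end Set

section PowerSet

variable {X : Type u} {E : Set (Set X)}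

lemma InGen.mem_iff_mem {g : Set X} (hg : InGen E g) {p q : X}
    (hpq : ∀ e ∈ E, p ∈ e ↔ q ∈ e) : p ∈ g ↔ q ∈ g := by
  induction hg with
  | base ha => exact hpq _ ha
  | bot => exact Iff.rfl
  | compl _ ih => exact ih.not
  | sup _ _ ih₁ ih₂ => exact ih₁.or ih₂

lemma InGen.exists_forall_ne_mem_iff_of_insert_singleton {x : X} {D : Set (Set X)} {g : Set X}
    (hg : InGen (insert {x} D) g) : ∃ u, InGen D u ∧ ∀ y ≠ x, y ∈ g ↔ y ∈ u := by
  induction hg with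
  | base ha =>
    rcases mem_insert_iff.1 ha with rfl | ha
    · exact ⟨∅, .bot, fun y hy => by simp [hy]⟩
    · exact ⟨_, .base ha, fun _ _ => Iff.rfl⟩
  | bot => exact ⟨∅, .bot, fun _ _ => Iff.rfl⟩
  | compl _ ih =>
    obtain ⟨u, hu, hgu⟩ := ih
    exact ⟨uᶜ, hu.compl, fun y hy => (hgu y hy).not⟩
  | sup _ _ ih₁ ih₂ =>
    obtain ⟨u₁, hu₁, hgu₁⟩ := ih₁
    obtain ⟨u₂, hu₂, hgu₂⟩ := ih₂
    exact ⟨u₁ ∪ u₂, hu₁.sup hu₂, fun y hy => (hgu₁ y hy).or (hgu₂ y hy)⟩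

lemma finite_setOf_inGen (hE : E.Finite) : {g | InGen E g}.Finite := by
  have := hE.to_subtype
  let pattern : X → E → Prop := fun x e => x ∈ (e : Set X)
  have hsat {g : Set X} (hg : InGen E g) (x : X) : x ∈ g ↔ pattern x ∈ pattern '' g :=
    ⟨mem_image_of_mem _, fun ⟨y, hy, hyx⟩ =>
      (hg.mem_iff_mem fun e he => (congrFun hyx ⟨e, he⟩).to_iff).1 hy⟩
  refine Finite.of_finite_image (f := (pattern '' ·)) (toFinite _) fun g hg g' hg' h => ?_
  have h : pattern '' g = pattern '' g' := h
  ext x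
  rw [hsat hg, hsat hg', h]

lemma mk_setOf_inGen_le (hE : ℵ₀ ≤ #E) : #{g | InGen E g} ≤ #E := by
  have : Infinite E := infinite_iff.2 hE
  classical
  have hsub : {g | InGen E g} ⊆ ⋃ F : Finset E, {g | InGen (Subtype.val '' (F : Set E)) g} := by
    intro g hg
    obtain ⟨F, hFE, hF⟩ := InGen.exists_finset hg
    refine mem_iUnion.2 ⟨F.subtype (· ∈ E), hF.mono fun e he => ?_⟩
    exact ⟨⟨e, hFE he⟩, Finset.mem_subtype.2 he, rfl⟩
  calc #{g | InGen E g}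
      ≤ #(Finset E) * ⨆ F : Finset E, #{g | InGen (Subtype.val '' (F : Set E)) g} :=
        (mk_le_mk_of_subset hsub).trans (mk_iUnion_le _)
    _ ≤ #E * ℵ₀ := mul_le_mul' (mk_finset_of_infinite E).le <| ciSup_le' fun F =>
        (lt_aleph0_iff_set_finite.2 (finite_setOf_inGen (F.finite_toSet.image _))).le
    _ = #E := mul_aleph0_eq hE

lemma Irred.insert_singleton {x : X} (hE : Irred E) (h₁ : ¬InGen E {x})
    (h₂ : ∀ a ∈ E, ¬InGen (E \ {a}) (a ∆ {x})) : Irred (insert {x} E) := by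
  rintro a ha hg
  rcases eq_or_ne a {x} with rfl | hax
  · exact h₁ (hg.mono fun s hs => (mem_insert_iff.1 hs.1).resolve_left hs.2)
  have haE : a ∈ E := (mem_insert_iff.1 ha).resolve_left hax
  rw [← insert_sdiff_singleton_comm hax.symm] at hg
  obtain ⟨u, hu, hau⟩ := hg.exists_forall_ne_mem_iff_of_insert_singleton
  rcases eq_or_eq_symmDiff_singleton_of_forall_ne hau with rfl | rfl
  · exact hE a haE hu
  · exact h₂ _ haE (by rwa [symmDiff_symmDiff_cancel_right])

lemma MaxIrred.inGen_singleton_or_symmDiff (hE : MaxIrred E) (x : X) :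
    InGen E {x} ∨ ∃ a ∈ E, InGen (E \ {a}) (a ∆ {x}) := by
  by_contra! h
  exact hE.2 {x} (fun hx => h.1 (.base hx)) (hE.1.insert_singleton h.1 h.2)

lemma MaxIrred.range_singleton_subset (hE : MaxIrred E) :
    range ({·} : X → Set X) ⊆ image2 (· ∆ ·) {g | InGen E g} (insert ∅ E) := by
  rintro _ ⟨x, rfl⟩
  rcases hE.inGen_singleton_or_symmDiff x with h | ⟨a, ha, h⟩
  · exact ⟨{x}, h, ∅, mem_insert _ _, symmDiff_bot _⟩
  · exact ⟨a ∆ {x}, h.mono sdiff_subset, a, mem_insert_of_mem _ ha,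
      symmDiff_symmDiff_self' _ _⟩

lemma MaxIrred.mk_le [Infinite X] (hE : MaxIrred E) : #X ≤ #E := by
  rcases lt_or_ge #E ℵ₀ with hfin | hinf
  · have hEfin := lt_aleph0_iff_set_finite.1 hfin
    refine absurd (((finite_setOf_inGen hEfin).image2 _ (hEfin.insert ∅)).subset
      hE.range_singleton_subset) (infinite_range_of_injective singleton_injective)
  calc #X = #(range ({·} : X → Set X)) := (mk_range_eq _ singleton_injective).symm
    _ ≤ #{g | InGen E g} * #(insert ∅ E : Set (Set X)) :=
      (mk_le_mk_of_subset hE.range_singleton_subset).trans mk_image2_le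
    _ ≤ #E * #E := mul_le_mul' (mk_setOf_inGen_le hinf) (mk_insert_le.trans (add_one_eq hinf).le)
    _ = #E := mul_eq_self hinf

end PowerSet

section InitialSegments

variable {X : Type u} [LinearOrder X]

def nonemptyInitialSegments (X : Type u) [Preorder X] : Set (Set X) :=
  Iio '' {x | ¬IsMin x}

lemma InGen.exists_forall_Icc_mem_iff {F : Set (Set X)} {β p₀ : X} (hp₀ : p₀ < β)
    (hF : ∀ s ∈ F, ∃ δ ≠ β, s = Iio δ) {g : Set X} (hg : InGen F g) :
    ∃ p < β, ∀ q ∈ Icc p β, q ∈ g ↔ β ∈ g := by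
  induction hg with
  | base hs =>
    obtain ⟨δ, hδβ, rfl⟩ := hF _ hs
    rcases hδβ.lt_or_gt with hδβ | hβδ
    · exact ⟨δ, hδβ, fun q hq => iff_of_false hq.1.not_gt hδβ.le.not_gt⟩
    · exact ⟨p₀, hp₀, fun q hq => iff_of_true (hq.2.trans_lt hβδ) hβδ⟩
  | bot => exact ⟨p₀, hp₀, fun _ _ => Iff.rfl⟩
  | compl _ ih =>
    obtain ⟨p, hpβ, hp⟩ := ih
    exact ⟨p, hpβ, fun q hq => (hp q hq).not⟩
  | sup _ _ ih₁ ih₂ =>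
    obtain ⟨p₁, hp₁β, hp₁⟩ := ih₁
    obtain ⟨p₂, hp₂β, hp₂⟩ := ih₂
    refine ⟨max p₁ p₂, max_lt hp₁β hp₂β, fun q hq => ?_⟩
    exact (hp₁ q ⟨le_of_max_le_left hq.1, hq.2⟩).or
      (hp₂ q ⟨le_of_max_le_right hq.1, hq.2⟩)

lemma irred_nonemptyInitialSegments : Irred (nonemptyInitialSegments X) := by
  rintro _ ⟨β, hβ, rfl⟩ hgen
  obtain ⟨p₀, hp₀⟩ := not_isMin_iff.1 hβ
  obtain ⟨p, hpβ, hp⟩ := hgen.exists_forall_Icc_mem_iff hp₀ <| by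
    rintro _ ⟨⟨δ, -, rfl⟩, hne⟩
    exact ⟨δ, fun h => hne (h ▸ rfl), rfl⟩
  exact lt_irrefl β ((hp p ⟨le_rfl, hpβ.le⟩).1 hpβ)

lemma IsLeast.Iic_diff {c : Set X} {β : X} (h : IsLeast c β) : Iic β \ c = Iio β := by
  ext y
  exact ⟨fun ⟨hyβ, hyc⟩ => hyβ.lt_of_ne fun hy => hyc (hy ▸ h.1),
    fun hyβ => ⟨hyβ.le, fun hyc => hyβ.not_ge (h.2 hyc)⟩⟩

lemma exists_isLeast_not_isMin [WellFoundedLT X] {b : Set X} (hb₀ : b.Nonempty)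
    (hb₁ : bᶜ.Nonempty) :
    ∃ c ∈ ({b, bᶜ} : Set (Set X)), ∃ β, IsLeast c β ∧ ¬IsMin β := by
  have hleast {s : Set X} (hs : s.Nonempty) : ∃ β, IsLeast s β :=
    let ⟨β, hβ, hmin⟩ := wellFounded_lt.has_min s hs
    ⟨β, hβ, fun y hy => not_lt.1 (hmin y hy)⟩
  obtain ⟨β₀, hβ₀⟩ := hleast hb₀
  obtain ⟨β₁, hβ₁⟩ := hleast hb₁
  have hne : β₀ ≠ β₁ := fun h => hβ₁.1 (h ▸ hβ₀.1)
  rcases hne.lt_or_gt with h | h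
  · exact ⟨bᶜ, by simp, β₁, hβ₁, not_isMin_of_lt h⟩
  · exact ⟨b, by simp, β₀, hβ₀, not_isMin_of_lt h⟩

lemma not_irred_insert_nonemptyInitialSegments [WellFoundedLT X] [SuccOrder X] [NoMaxOrder X]
    {b : Set X} (hb : b ∉ nonemptyInitialSegments X) :
    ¬Irred (insert b (nonemptyInitialSegments X)) := by
  intro hirr
  have hgen : ¬InGen (nonemptyInitialSegments X) b := fun h =>
    hirr b (mem_insert _ _) (by rwa [insert_sdiff_self_of_notMem hb])
  have hb₀ : b.Nonempty := nonempty_iff_ne_empty.2 fun h => hgen (h ▸ .bot)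
  have hb₁ : bᶜ.Nonempty := nonempty_compl.2 fun h => hgen (h ▸ .top)
  obtain ⟨c, hc, β, hβ, hβmin⟩ := exists_isLeast_not_isMin hb₀ hb₁
  have hβF : Iio β ∈ nonemptyInitialSegments X := ⟨β, hβmin, rfl⟩
  set D := insert b (nonemptyInitialSegments X) \ {Iio β}
  have hsucc : Iio (Order.succ β) ∈ D := by
    refine ⟨mem_insert_of_mem _ ⟨_, not_isMin_of_lt (Order.lt_succ β), rfl⟩, fun h => ?_⟩
    exact (Order.lt_succ β).ne' (Iio_injective h)
  have hbD : b ∈ D := ⟨mem_insert _ _, fun h => hb ((mem_singleton_iff.1 h) ▸ hβF)⟩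
  have hcD : InGen D c := by
    rcases hc with rfl | rfl
    exacts [.base hbD, (InGen.base hbD).compl]
  have hIio := (InGen.base hsucc).sdiff hcD
  rw [Order.Iio_succ, hβ.Iic_diff] at hIio
  exact hirr _ (mem_insert_of_mem _ hβF) hIio

lemma maxIrred_nonemptyInitialSegments [WellFoundedLT X] [SuccOrder X] [NoMaxOrder X] :
    MaxIrred (nonemptyInitialSegments X) :=
  ⟨irred_nonemptyInitialSegments, fun _ => not_irred_insert_nonemptyInitialSegments⟩

lemma mk_nonemptyInitialSegments [Infinite X] : #(nonemptyInitialSegments X) = #X := by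
  rw [nonemptyInitialSegments, mk_image_eq Iio_injective]
  refine mk_compl_of_infinite {x | IsMin x} ?_
  have hsub : {x : X | IsMin x}.Subsingleton := fun x hx y hy =>
    (le_total x y).elim (fun h => h.antisymm (hy h)) fun h => (hx h).antisymm h
  exact hsub.finite.lt_aleph0.trans_le (aleph0_le_mk X)

end InitialSegments

lemma DenseSub.range_singleton_subset {X : Type u} {S : Set (Set X)} (hS : DenseSub S) :
    range ({·} : X → Set X) ⊆ S := by
  rintro _ ⟨x, rfl⟩
  obtain ⟨d, hd, hd₀, hdx⟩ := hS {x} (singleton_ne_empty x)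
  rwa [(subset_singleton_iff_eq.1 hdx).resolve_left hd₀] at hd

lemma denseSub_range_singleton {X : Type u} : DenseSub (range ({·} : X → Set X)) := fun _ hb =>
  let ⟨x, hx⟩ := nonempty_iff_ne_empty.2 hb
  ⟨{x}, mem_range_self x, singleton_ne_empty x, singleton_subset_iff.2 hx⟩

theorem piWeight_set (X : Type u) : piWeight (Set X) = #X := by
  have hsingletons := mk_range_eq _ (singleton_injective (α := X))
  refine IsLeast.csInf_eq ⟨⟨_, denseSub_range_singleton, hsingletons⟩, ?_⟩
  rintro _ ⟨S, hS, rfl⟩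
  exact hsingletons.ge.trans (mk_le_mk_of_subset hS.range_singleton_subset)

theorem irrMM_set (X : Type u) [LinearOrder X] [WellFoundedLT X] [SuccOrder X] [NoMaxOrder X]
    [Nonempty X] : irrMM (Set X) = #X := by
  refine IsLeast.csInf_eq
    ⟨⟨_, maxIrred_nonemptyInitialSegments, mk_nonemptyInitialSegments⟩, ?_⟩
  rintro _ ⟨E, hE, rfl⟩
  exact hE.mk_le

theorem irrMM_and_piWeight_powerset (κ : Cardinal.{u}) (hκ : Cardinal.aleph0 ≤ κ) :
    irrMM (Set κ.ord.ToType) = κ ∧ piWeight (Set κ.ord.ToType) = κ := by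
  have : NoMaxOrder κ.ord.ToType := noMaxOrder hκ
  have : Nonempty κ.ord.ToType :=
    mk_ne_zero_iff.1 ((mk_ord_toType κ).trans_ne (aleph0_pos.trans_le hκ).ne')
  rw [irrMM_set, piWeight_set, mk_ord_toType]
  exact ⟨rfl, rfl⟩
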